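/- Let p ≥ 1, let P be a Borel probability measure on ℝ^d with finite p-th moment, let k > 0, let x₀ ≠ 0 be a real number, and let U : ℝ → ℝ be non-decreasing with lim_{x→−∞} U(x) = −∞. Suppose that there do NOT exist constants x̲ > 0 and C₁ > 0 with U(−x̲) < 0 and U(x) ≥ −C₁(1 + |x|^p) for all x ≤ −x̲. Then for every w ∈ ℝ^d with w ≠ 0 and E_P[U(x₀ + x₀⟨w, X⟩)] < ∞, one has u(k,w) := inf_{Q ∈ B_k(P)} E_Q[U(x₀ + x₀⟨w, X⟩)] = −∞. -/

import Mathlib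

open MeasureTheory Filter
open scoped ENNReal

noncomputable section

abbrev Evec (d : ℕ) : Type := EuclideanSpace ℝ (Fin d)

def couplings {d : ℕ} (P Q : Measure (Evec d)) : Set (Measure (Evec d × Evec d)) :=
  {π | IsProbabilityMeasure π ∧ π.map Prod.fst = P ∧ π.map Prod.snd = Q}

noncomputable def Wdist {d : ℕ} (p : ℝ) (P Q : Measure (Evec d)) : ℝ≥0∞ :=
  ⨅ π ∈ couplings P Q, (∫⁻ z, (‖z.1 - z.2‖₊ : ℝ≥0∞) ^ p ∂π) ^ (1 / p)

def wBall {d : ℕ} (p k : ℝ) (P : Measure (Evec d)) : Set (Measure (Evec d)) :=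
  {Q | IsProbabilityMeasure Q ∧ (∫⁻ x, (‖x‖₊ : ℝ≥0∞) ^ p ∂Q) < ⊤ ∧ Wdist p P Q ≤ ENNReal.ofReal k}

/-- The (extended-real-valued) expectation `E_Q[f] = E_Q[f⁺] − E_Q[f⁻]`. -/
noncomputable def eexp {α : Type*} [MeasurableSpace α] (Q : Measure α) (f : α → ℝ) : EReal :=
  ((∫⁻ x, ENNReal.ofReal (f x) ∂Q : ℝ≥0∞) : EReal) - ((∫⁻ x, ENNReal.ofReal (-(f x)) ∂Q : ℝ≥0∞) : EReal)

/-- The robust value `u(k,w) = inf_{Q ∈ B_k(P)} E_Q[U(x₀ + x₀⟨w,X⟩)]`. -/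
noncomputable def uval {d : ℕ} (p k x₀ : ℝ) (P : Measure (Evec d)) (U : ℝ → ℝ) (w : Evec d) : EReal :=
  ⨅ Q ∈ wBall p k P, eexp Q (fun x => U (x₀ + x₀ * (inner ℝ w x : ℝ)))

/-! Without the growth bound there are, for every `C > 0`, points `x ≤ -1` with
`U x < -C (1 + |x| ^ p)`. Pick `z` with `x₀ + x₀ ⟪w, z⟫ = x`; it can be taken with `‖z‖ ≲ |x|`.
Moving a mass `m ≍ (1 + |x| ^ p)⁻¹` of `P` to `z` costs `W_p^p ≤ m E_P|X - z|^p ≲ m (1 + |x| ^ p)`,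
so for a uniform constant the new measure stays in the ball, while the expected utility drops by
at least `m |U x| ≳ C`. -/

lemma isProbabilityMeasure_smul_add_smul {α : Type*} [MeasurableSpace α] (μ ν : Measure α)
    [IsProbabilityMeasure μ] [IsProbabilityMeasure ν] {m : ℝ≥0∞} (hm : m ≤ 1) :
    IsProbabilityMeasure ((1 - m) • μ + m • ν) :=
  ⟨by simp [tsub_add_cancel_of_le hm]⟩

lemma lintegral_smul_add_smul_dirac {α : Type*} [MeasurableSpace α] [MeasurableSingletonClass α]
    (P : Measure α) (m : ℝ≥0∞) (z : α) (g : α → ℝ≥0∞) :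
    ∫⁻ x, g x ∂((1 - m) • P + m • Measure.dirac z) = (1 - m) * ∫⁻ x, g x ∂P + m * g z := by
  rw [lintegral_add_measure, lintegral_smul_measure, lintegral_smul_measure, lintegral_dirac,
    smul_eq_mul, smul_eq_mul]

lemma lintegral_nnnorm_sub_rpow_le {E : Type*} [SeminormedAddCommGroup E] [MeasurableSpace E]
    (μ : Measure E) [IsProbabilityMeasure μ] {p : ℝ} (hp : 1 ≤ p) (z : E) :
    ∫⁻ x, (‖x - z‖₊ : ℝ≥0∞) ^ p ∂μ ≤
      2 ^ (p - 1) * (∫⁻ x, (‖x‖₊ : ℝ≥0∞) ^ p ∂μ + (‖z‖₊ : ℝ≥0∞) ^ p) :=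
  calc ∫⁻ x, (‖x - z‖₊ : ℝ≥0∞) ^ p ∂μ
      ≤ ∫⁻ x, 2 ^ (p - 1) * ((‖x‖₊ : ℝ≥0∞) ^ p + (‖z‖₊ : ℝ≥0∞) ^ p) ∂μ := by
        refine lintegral_mono fun x => ?_
        calc (‖x - z‖₊ : ℝ≥0∞) ^ p ≤ ((‖x‖₊ : ℝ≥0∞) + ‖z‖₊) ^ p := by
              gcongr; exact_mod_cast nnnorm_sub_le x z
          _ ≤ _ := ENNReal.rpow_add_le_mul_rpow_add_rpow _ _ hp
    _ = _ := by
        rw [lintegral_const_mul' _ _ (by simp), lintegral_add_right _ measurable_const,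
          lintegral_const, measure_univ, mul_one]

lemma eexp_smul_add_smul_dirac_le {α : Type*} [MeasurableSpace α] [MeasurableSingletonClass α]
    (P : Measure α) (m : ℝ≥0∞) (f : α → ℝ) {z : α} (hfz : f z ≤ 0) :
    eexp ((1 - m) • P + m • Measure.dirac z) f ≤
      ((∫⁻ x, ENNReal.ofReal (f x) ∂P : ℝ≥0∞) : EReal) -
        ((m * ENNReal.ofReal (-f z) : ℝ≥0∞) : EReal) := by
  refine EReal.sub_le_sub ?_ ?_ <;>
    rw [EReal.coe_ennreal_le_coe_ennreal_iff, lintegral_smul_add_smul_dirac]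
  · rw [ENNReal.ofReal_of_nonpos hfz, mul_zero, add_zero]
    exact mul_le_of_le_one_left' tsub_le_self
  · exact le_add_self

lemma eexp_eq_bot_of_lintegral_neg_eq_top {α : Type*} [MeasurableSpace α] {Q : Measure α}
    {f : α → ℝ} (h : ∫⁻ x, ENNReal.ofReal (-f x) ∂Q = ⊤) : eexp Q f = ⊥ := by
  rw [eexp, h]
  exact EReal.sub_top _

lemma lintegral_ofReal_ne_top_of_eexp_lt_top {α : Type*} [MeasurableSpace α] {Q : Measure α}
    {f : α → ℝ} (hf : eexp Q f < ⊤) (h : ∫⁻ x, ENNReal.ofReal (-f x) ∂Q ≠ ⊤) :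
    ∫⁻ x, ENNReal.ofReal (f x) ∂Q ≠ ⊤ := by
  intro htop
  rw [eexp, htop, ← EReal.coe_ennreal_toReal h, EReal.coe_ennreal_top, EReal.top_sub_coe] at hf
  exact lt_irrefl _ hf

lemma EReal.eq_bot_of_forall_le_sub_ofReal {u : EReal} {a : ℝ≥0∞} (ha : a ≠ ⊤)
    (h : ∀ N : ℝ, 0 < N → u ≤ (a : EReal) - (ENNReal.ofReal N : EReal)) : u = ⊥ := by
  refine (EReal.eq_bot_iff_forall_lt u).2 fun y => ?_
  set N := max 1 (a.toReal - y + 1)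
  have hN : 0 < N := lt_max_of_lt_left one_pos
  calc u ≤ (a : EReal) - (ENNReal.ofReal N : EReal) := h N hN
    _ = ((a.toReal - N : ℝ) : EReal) := by
        rw [EReal.coe_ennreal_ofReal, max_eq_left hN.le, ← EReal.coe_ennreal_toReal ha,
          EReal.coe_sub]
    _ < y := EReal.coe_lt_coe_iff.2 (by linarith [le_max_right 1 (a.toReal - y + 1)])

lemma exists_inner_eq_of_ne_zero {E : Type*} [NormedAddCommGroup E] [InnerProductSpace ℝ E]
    {w : E} (hw : w ≠ 0) (s : ℝ) : ∃ z : E, inner ℝ w z = s ∧ ‖z‖ = |s| / ‖w‖ := by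
  have hw' : ‖w‖ ≠ 0 := norm_ne_zero_iff.2 hw
  refine ⟨(s / ‖w‖ ^ 2) • w, ?_, ?_⟩
  · rw [real_inner_smul_right, real_inner_self_eq_norm_sq]
    field_simp
  · rw [norm_smul, Real.norm_eq_abs, abs_div, abs_of_nonneg (sq_nonneg ‖w‖)]
    field_simp

lemma exists_affine_preimage_rpow_le {E : Type*} [NormedAddCommGroup E] [InnerProductSpace ℝ E]
    {x₀ : ℝ} (hx₀ : x₀ ≠ 0) {w : E} (hw : w ≠ 0) {p : ℝ} (hp : 0 ≤ p) :
    ∃ c > 0, ∀ x : ℝ, 1 ≤ |x| →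
      ∃ z : E, x₀ + x₀ * inner ℝ w z = x ∧ 1 + ‖z‖ ^ p ≤ c * (1 + |x| ^ p) := by
  set c := (1 / |x₀| + 1) / ‖w‖
  have hc : 0 < c := by positivity
  refine ⟨1 + c ^ p, by positivity, fun x hx => ?_⟩
  obtain ⟨z, hzw, hz⟩ := exists_inner_eq_of_ne_zero hw (x / x₀ - 1)
  refine ⟨z, by rw [hzw]; field_simp; ring, ?_⟩
  have hzx : ‖z‖ ≤ c * |x| := by
    rw [hz, div_mul_eq_mul_div]
    gcongr
    calc |x / x₀ - 1| ≤ |x| / |x₀| + 1 := by simpa [abs_div] using abs_sub (x / x₀) 1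
      _ ≤ (1 / |x₀| + 1) * |x| := by rw [add_mul, one_div_mul_eq_div]; linarith
  have hzp : ‖z‖ ^ p ≤ c ^ p * |x| ^ p := by
    rw [← Real.mul_rpow hc.le (abs_nonneg x)]
    gcongr
  nlinarith [Real.rpow_nonneg (abs_nonneg x) p, Real.rpow_nonneg hc.le p]

lemma exists_lt_neg_mul_of_not_growth {p : ℝ} {U : ℝ → ℝ} (hUbot : Tendsto U atBot atBot)
    (hnot : ¬ ∃ xu C₁ : ℝ, 0 < xu ∧ 0 < C₁ ∧ U (-xu) < 0 ∧
      ∀ x : ℝ, x ≤ -xu → -C₁ * (1 + |x| ^ p) ≤ U x)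
    {C : ℝ} (hC : 0 < C) : ∃ x ≤ -1, U x < -C * (1 + |x| ^ p) := by
  obtain ⟨b, hb⟩ := eventually_atBot.1 (hUbot.eventually_lt_atBot 0)
  by_contra! h
  refine hnot ⟨max 1 (-b), C, by positivity, hC, hb _ (by linarith [le_max_right 1 (-b)]),
    fun x hx => h x (hx.trans ?_)⟩
  linarith [le_max_left 1 (-b)]

section WassersteinBall

variable {d : ℕ}

lemma map_diag_mem_couplings (P : Measure (Evec d)) [IsProbabilityMeasure P] :
    P.map (fun x => (x, x)) ∈ couplings P P := by
  refine ⟨Measure.isProbabilityMeasure_map (by fun_prop), ?_, ?_⟩ <;>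
    rw [Measure.map_map (by fun_prop) (by fun_prop)] <;> exact Measure.map_id

lemma map_prodMk_const_mem_couplings (P : Measure (Evec d)) [IsProbabilityMeasure P]
    (z : Evec d) : P.map (fun x => (x, z)) ∈ couplings P (Measure.dirac z) := by
  refine ⟨Measure.isProbabilityMeasure_map (by fun_prop), ?_, ?_⟩
  · rw [Measure.map_map (by fun_prop) (by fun_prop)]
    exact Measure.map_id
  · rw [Measure.map_map (by fun_prop) (by fun_prop)]
    simp [Function.comp_def, Measure.map_const]

lemma smul_add_smul_mem_couplings {P Q₁ Q₂ : Measure (Evec d)}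
    {π₁ π₂ : Measure (Evec d × Evec d)} (h₁ : π₁ ∈ couplings P Q₁) (h₂ : π₂ ∈ couplings P Q₂)
    {m : ℝ≥0∞} (hm : m ≤ 1) :
    (1 - m) • π₁ + m • π₂ ∈ couplings P ((1 - m) • Q₁ + m • Q₂) := by
  obtain ⟨hπ₁, hP₁, hQ₁⟩ := h₁
  obtain ⟨hπ₂, hP₂, hQ₂⟩ := h₂
  refine ⟨isProbabilityMeasure_smul_add_smul π₁ π₂ hm, ?_, ?_⟩
  · rw [Measure.map_add _ _ measurable_fst, Measure.map_smul, Measure.map_smul, hP₁, hP₂,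
      ← add_smul, tsub_add_cancel_of_le hm, one_smul]
  · rw [Measure.map_add _ _ measurable_snd, Measure.map_smul, Measure.map_smul, hQ₁, hQ₂]

lemma Wdist_smul_add_smul_dirac_le {p : ℝ} (hp : 0 < p) (P : Measure (Evec d))
    [IsProbabilityMeasure P] (z : Evec d) {m : ℝ≥0∞} (hm : m ≤ 1) :
    Wdist p P ((1 - m) • P + m • Measure.dirac z) ≤
      (m * ∫⁻ x, (‖x - z‖₊ : ℝ≥0∞) ^ p ∂P) ^ (1 / p) := by
  have hcost : Measurable fun a : Evec d × Evec d => (‖a.1 - a.2‖₊ : ℝ≥0∞) ^ p := by fun_prop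
  refine (iInf₂_le _ (smul_add_smul_mem_couplings (map_diag_mem_couplings P)
    (map_prodMk_const_mem_couplings P z) hm)).trans_eq ?_
  rw [lintegral_add_measure, lintegral_smul_measure, lintegral_smul_measure,
    lintegral_map hcost (by fun_prop), lintegral_map hcost (by fun_prop)]
  simp [ENNReal.zero_rpow_of_pos hp]

lemma smul_add_smul_dirac_mem_wBall {p k : ℝ} (hp : 1 ≤ p) (P : Measure (Evec d))
    [IsProbabilityMeasure P] (hmom : ∫⁻ x, (‖x‖₊ : ℝ≥0∞) ^ p ∂P < ⊤) (z : Evec d)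
    {m : ℝ≥0∞} (hm : m ≤ 1)
    (hcost : m * (2 ^ (p - 1) * (∫⁻ x, (‖x‖₊ : ℝ≥0∞) ^ p ∂P + (‖z‖₊ : ℝ≥0∞) ^ p)) ≤
      ENNReal.ofReal k ^ p) :
    (1 - m) • P + m • Measure.dirac z ∈ wBall p k P := by
  have hp0 : 0 < p := by linarith
  refine ⟨isProbabilityMeasure_smul_add_smul P _ hm, ?_, ?_⟩
  · rw [lintegral_smul_add_smul_dirac]
    exact ENNReal.add_lt_top.2 ⟨ENNReal.mul_lt_top (tsub_le_self.trans_lt ENNReal.one_lt_top) hmom,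
      ENNReal.mul_lt_top (hm.trans_lt ENNReal.one_lt_top)
        (ENNReal.rpow_lt_top_of_nonneg hp0.le ENNReal.coe_ne_top)⟩
  · calc Wdist p P _ ≤ (m * ∫⁻ x, (‖x - z‖₊ : ℝ≥0∞) ^ p ∂P) ^ (1 / p) :=
          Wdist_smul_add_smul_dirac_le hp0 P z hm
      _ ≤ (ENNReal.ofReal k ^ p) ^ (1 / p) := by
          gcongr
          exact le_trans (by gcongr; exact lintegral_nnnorm_sub_rpow_le P hp z) hcost
      _ = ENNReal.ofReal k := by rw [one_div, ENNReal.rpow_rpow_inv hp0.ne']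

lemma self_mem_wBall {p k : ℝ} (hp : 1 ≤ p) (P : Measure (Evec d)) [IsProbabilityMeasure P]
    (hmom : ∫⁻ x, (‖x‖₊ : ℝ≥0∞) ^ p ∂P < ⊤) : P ∈ wBall p k P := by
  simpa using smul_add_smul_dirac_mem_wBall hp P hmom 0 zero_le_one (by simp)

lemma exists_forall_smul_add_smul_dirac_mem_wBall {p k : ℝ} (hp : 1 ≤ p) (hk : 0 < k)
    (P : Measure (Evec d)) [IsProbabilityMeasure P]
    (hmom : ∫⁻ x, (‖x‖₊ : ℝ≥0∞) ^ p ∂P < ⊤) :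
    ∃ δ > 0, ∀ (z : Evec d) (m : ℝ), 0 ≤ m → m ≤ 1 → m * (1 + ‖z‖ ^ p) ≤ δ →
      (1 - ENNReal.ofReal m) • P + ENNReal.ofReal m • Measure.dirac z ∈ wBall p k P := by
  set M := (∫⁻ x, (‖x‖₊ : ℝ≥0∞) ^ p ∂P).toReal
  have hM : 0 ≤ M := ENNReal.toReal_nonneg
  refine ⟨k ^ p / (2 ^ (p - 1) * (M + 1)), by positivity, fun z m hm0 hm1 hmδ => ?_⟩
  refine smul_add_smul_dirac_mem_wBall hp P hmom z (ENNReal.ofReal_le_one.2 hm1) ?_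
  have hz : (‖z‖₊ : ℝ≥0∞) ^ p = ENNReal.ofReal (‖z‖ ^ p) := by
    rw [← enorm_eq_nnnorm, ← ofReal_norm,
      ENNReal.ofReal_rpow_of_nonneg (norm_nonneg z) (by linarith)]
  have h2 : (2 : ℝ≥0∞) ^ (p - 1) = ENNReal.ofReal (2 ^ (p - 1)) := by
    rw [← ENNReal.ofReal_rpow_of_pos two_pos, ENNReal.ofReal_ofNat]
  rw [← ENNReal.ofReal_toReal hmom.ne, hz, h2, ← ENNReal.ofReal_add hM (by positivity),
    ← ENNReal.ofReal_mul (by positivity), ← ENNReal.ofReal_mul hm0,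
    ENNReal.ofReal_rpow_of_nonneg hk.le (by linarith)]
  refine ENNReal.ofReal_le_ofReal ?_
  have hMz : M + ‖z‖ ^ p ≤ (1 + ‖z‖ ^ p) * (M + 1) := by
    nlinarith [mul_nonneg hM (by positivity : (0 : ℝ) ≤ ‖z‖ ^ p)]
  calc m * (2 ^ (p - 1) * (M + ‖z‖ ^ p)) ≤ m * (1 + ‖z‖ ^ p) * (2 ^ (p - 1) * (M + 1)) := by
        have := mul_le_mul_of_nonneg_left hMz hm0
        nlinarith [(by positivity : (0 : ℝ) < 2 ^ (p - 1))]
    _ ≤ k ^ p := (le_div_iff₀ (by positivity)).1 hmδ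

lemma exists_forall_one_le_abs_exists_mem_wBall {p k x₀ : ℝ} (hp : 1 ≤ p) (hk : 0 < k)
    (hx₀ : x₀ ≠ 0) (P : Measure (Evec d)) [IsProbabilityMeasure P]
    (hmom : ∫⁻ x, (‖x‖₊ : ℝ≥0∞) ^ p ∂P < ⊤) {w : Evec d} (hw : w ≠ 0) :
    ∃ ε > 0, ∀ x : ℝ, 1 ≤ |x| → ∃ (z : Evec d) (m : ℝ),
      x₀ + x₀ * inner ℝ w z = x ∧ 0 ≤ m ∧ ε ≤ m * (1 + |x| ^ p) ∧
      (1 - ENNReal.ofReal m) • P + ENNReal.ofReal m • Measure.dirac z ∈ wBall p k P := by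
  obtain ⟨δ, hδ, hball⟩ := exists_forall_smul_add_smul_dirac_mem_wBall hp hk P hmom
  obtain ⟨c, hc, hpreim⟩ := exists_affine_preimage_rpow_le hx₀ hw (by linarith : 0 ≤ p)
  refine ⟨min 1 (δ / c), by positivity, fun x hx => ?_⟩
  obtain ⟨z, hzx, hz⟩ := hpreim x hx
  set T := 1 + |x| ^ p
  have hT : 1 ≤ T := le_add_of_nonneg_right (by positivity)
  set m := min 1 (δ / (c * T))
  have hm0 : 0 ≤ m := by positivity
  have hmT : min 1 (δ / c) ≤ m * T := by
    have hδT : δ / (c * T) * T = δ / c := by field_simp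
    rw [min_mul_of_nonneg _ _ (by positivity), one_mul, hδT]
    exact min_le_min_right _ hT
  have hmδ : m * (1 + ‖z‖ ^ p) ≤ δ := calc
    m * (1 + ‖z‖ ^ p) ≤ δ / (c * T) * (c * T) := by gcongr; exact min_le_right _ _
    _ = δ := div_mul_cancel₀ _ (by positivity)
  exact ⟨z, m, hzx, hm0, hmT, hball z m hm0 (min_le_left _ _) hmδ⟩

lemma uval_le_eexp_of_mem_wBall {p k x₀ : ℝ} {P Q : Measure (Evec d)} {U : ℝ → ℝ}
    {w : Evec d} (hQ : Q ∈ wBall p k P) :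
    uval p k x₀ P U w ≤ eexp Q (fun x => U (x₀ + x₀ * (inner ℝ w x : ℝ))) :=
  iInf₂_le Q hQ

end WassersteinBall

theorem uval_eq_bot_of_not_growth_general {d : ℕ} (p k x₀ : ℝ) (hp : 1 ≤ p) (hk : 0 < k) (hx₀ : x₀ ≠ 0)
    (P : Measure (Evec d)) [IsProbabilityMeasure P]
    (hmom : (∫⁻ x, (‖x‖₊ : ℝ≥0∞) ^ p ∂P) < ⊤)
    (U : ℝ → ℝ) (hUbot : Tendsto U atBot atBot)
    (hnot : ¬ ∃ xu C₁ : ℝ, 0 < xu ∧ 0 < C₁ ∧ U (-xu) < 0 ∧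
      ∀ x : ℝ, x ≤ -xu → -C₁ * (1 + |x| ^ p) ≤ U x)
    (w : Evec d) (hw : w ≠ 0)
    (hfin : eexp P (fun x => U (x₀ + x₀ * (inner ℝ w x : ℝ))) < ⊤) :
    uval p k x₀ P U w = ⊥ := by
  set f : Evec d → ℝ := fun x => U (x₀ + x₀ * (inner ℝ w x : ℝ))
  by_cases hneg : ∫⁻ x, ENNReal.ofReal (-f x) ∂P = ⊤
  · exact le_bot_iff.1 ((uval_le_eexp_of_mem_wBall (self_mem_wBall hp P hmom)).trans
      (eexp_eq_bot_of_lintegral_neg_eq_top hneg).le)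
  obtain ⟨ε, hε, hmass⟩ := exists_forall_one_le_abs_exists_mem_wBall hp hk hx₀ P hmom hw
  refine EReal.eq_bot_of_forall_le_sub_ofReal
    (lintegral_ofReal_ne_top_of_eexp_lt_top hfin hneg) fun N hN => ?_
  obtain ⟨x, hx, hUx⟩ := exists_lt_neg_mul_of_not_growth hUbot hnot (div_pos hN hε)
  obtain ⟨z, m, hzx, hm0, hmT, hQ⟩ := hmass x (le_abs.2 (Or.inr (by linarith)))
  have hfz : f z = U x := by simp only [f, hzx]
  have hfz0 : f z ≤ 0 := by
    rw [hfz]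
    nlinarith [mul_pos (div_pos hN hε) (by positivity : (0 : ℝ) < 1 + |x| ^ p)]
  have hmN : N ≤ m * -f z := calc
    N = N / ε * ε := (div_mul_cancel₀ _ hε.ne').symm
    _ ≤ N / ε * (m * (1 + |x| ^ p)) := by gcongr
    _ ≤ m * -f z := by rw [hfz]; nlinarith
  calc uval p k x₀ P U w ≤ eexp _ f := uval_le_eexp_of_mem_wBall hQ
    _ ≤ _ := eexp_smul_add_smul_dirac_le P _ f hfz0
    _ ≤ _ := by
        refine EReal.sub_le_sub le_rfl (EReal.coe_ennreal_le_coe_ennreal_iff.2 ?_)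
        rw [← ENNReal.ofReal_mul hm0]
        exact ENNReal.ofReal_le_ofReal hmN

/-- if the lower growth condition (Assumption 1) fails, the problem is
ill-posed: `u(k,w) = −∞` for every `w ≠ 0` with `E_P[U(x₀+x₀⟨w,X⟩)] < ∞`. -/
theorem uval_eq_bot_of_not_growth {d : ℕ} (p k x₀ : ℝ) (hp : 1 ≤ p) (hk : 0 < k) (hx₀ : x₀ ≠ 0)
    (P : Measure (Evec d)) [IsProbabilityMeasure P]
    (hmom : (∫⁻ x, (‖x‖₊ : ℝ≥0∞) ^ p ∂P) < ⊤)
    (U : ℝ → ℝ) (hU : Monotone U) (hUbot : Tendsto U atBot atBot)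
    (hnot : ¬ ∃ xu C₁ : ℝ, 0 < xu ∧ 0 < C₁ ∧ U (-xu) < 0 ∧
      ∀ x : ℝ, x ≤ -xu → -C₁ * (1 + |x| ^ p) ≤ U x)
    (w : Evec d) (hw : w ≠ 0)
    (hfin : eexp P (fun x => U (x₀ + x₀ * (inner ℝ w x : ℝ))) < ⊤) :
    uval p k x₀ P U w = ⊥ :=
  uval_eq_bot_of_not_growth_general p k x₀ hp hk hx₀ P hmom U hUbot hnot w hw hfin
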